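/- Let H be a Hermitian d×d matrix with spectral projections P_E, and let φ, ψ ∈ ℂ^d be unit vectors with p_E = ‖P_E φ‖², q_E = ‖P_E ψ‖², and, for p_E ≠ 0, φ_E = P_E φ/‖P_E φ‖; for q_E ≠ 0, ψ_E = P_E ψ/‖P_E ψ‖. Assume Sp(φ) ∩ Sp(ψ) ≠ ∅, and set F_max = ∑_{E ∈ Sp(φ) ∩ Sp(ψ)} q_E and c = min_{E ∈ Sp(φ) ∩ Sp(ψ)} p_E/q_E. Then: (i) every quantum operation ℳ with Kraus operators commuting with H, with Tr[ℳ(|φ⟩⟨φ|)] > 0 and with normalized fidelity ⟨ψ|ℳ(|φ⟩⟨φ|)|ψ⟩ / Tr[ℳ(|φ⟩⟨φ|)] equal to F_max, satisfies Tr[ℳ(|φ⟩⟨φ|)] ≤ c · F_max; and (ii) the single Kraus operator M = ∑_{E ∈ Sp(φ) ∩ Sp(ψ)} √(c q_E/p_E) |ψ_E⟩⟨φ_E| satisfies M†M ≤ I, commutes with H, and achieves normalized fidelity F_max with success probability exactly c · F_max. -/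

import Mathlib

open Matrix
open scoped ComplexOrder Classical

/-- `wt P v = ‖P v‖²`, the weight of the vector `v` on the range of `P`. -/
noncomputable def wt {d : ℕ} (P : Matrix (Fin d) (Fin d) ℂ) (v : Fin d → ℂ) : ℝ :=
  (star (P *ᵥ v) ⬝ᵥ (P *ᵥ v)).re

/-!
An energy-preserving Kraus operator `N` commutes with every spectral projection (the eigenvalues
`E i` are distinct), so `⟨ψ, N φ⟩ = ∑_E ⟨P_E ψ, N P_E φ⟩`, the sum running over
`Sp(φ) ∩ Sp(ψ)`. The weighted Cauchy–Schwarz inequality with weights `q_E` bounds the fidelity by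
`F_max`; when the bound is attained, its equality case forces `⟨P_E ψ, N_k P_E φ⟩ = λ_k q_E` for
every `E` and `k`, and subnormalization `∑_k ‖N_k P_E φ‖² ≤ p_E` then gives
`q_E · Tr ℳ(|φ⟩⟨φ|) ≤ p_E · F_max` for each `E`, i.e. success probability at most `c · F_max`.
The operator `M` maps `φ` to `√c ∑_E P_E ψ`, from which its fidelity and success probability are
computed; `c ≤ p_E / q_E` makes it sub-normalized, and it is block diagonal, hence commutes
with `H`.
-/

section SqNorm

variable {n : Type*} [Fintype n]

/-- With this normalization `wt P v = sqNorm (P *ᵥ v)` holds by definition. -/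
noncomputable def sqNorm (v : n → ℂ) : ℝ := (star v ⬝ᵥ v).re

theorem ofReal_sqNorm (v : n → ℂ) : (sqNorm v : ℂ) = star v ⬝ᵥ v :=
  (Complex.eq_re_of_ofReal_le (dotProduct_star_self_nonneg v)).symm

theorem sqNorm_eq_norm_sq (v : n → ℂ) : sqNorm v = ‖WithLp.toLp 2 v‖ ^ 2 := by
  rw [@norm_sq_eq_re_inner ℂ, EuclideanSpace.inner_toLp_toLp, dotProduct_comm]; rfl

theorem sqNorm_nonneg (v : n → ℂ) : 0 ≤ sqNorm v := by
  rw [sqNorm_eq_norm_sq]; positivity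

theorem sqNorm_eq_zero {v : n → ℂ} : sqNorm v = 0 ↔ v = 0 := by
  rw [sqNorm_eq_norm_sq]; simp

theorem normSq_dotProduct_le (x y : n → ℂ) :
    Complex.normSq (star x ⬝ᵥ y) ≤ sqNorm x * sqNorm y := by
  have h := norm_inner_le_norm (𝕜 := ℂ) (WithLp.toLp 2 x) (WithLp.toLp 2 y)
  rw [EuclideanSpace.inner_toLp_toLp, dotProduct_comm] at h
  rw [Complex.normSq_eq_norm_sq, sqNorm_eq_norm_sq, sqNorm_eq_norm_sq, ← mul_pow]
  gcongr

theorem sqNorm_smul (a : ℂ) (v : n → ℂ) : sqNorm (a • v) = Complex.normSq a * sqNorm v := by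
  apply Complex.ofReal_injective
  rw [ofReal_sqNorm, Complex.ofReal_mul, ofReal_sqNorm, star_smul, smul_dotProduct,
    dotProduct_smul, smul_eq_mul, smul_eq_mul, ← mul_assoc, Complex.star_def,
    Complex.normSq_eq_conj_mul_self]

theorem dotProduct_conjTranspose_mulVec (A : Matrix n n ℂ) (x y : n → ℂ) :
    star x ⬝ᵥ (Aᴴ *ᵥ y) = star (A *ᵥ x) ⬝ᵥ y := by
  rw [star_mulVec, ← dotProduct_mulVec]

end SqNorm

section KrausOperation

variable {n κ : Type*} [Fintype n] [Fintype κ]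

theorem trace_mul_vecMulVec_mul_conjTranspose (N : Matrix n n ℂ) (φ : n → ℂ) :
    trace (N * vecMulVec φ (star φ) * Nᴴ) = sqNorm (N *ᵥ φ) := by
  rw [mul_vecMulVec, vecMulVec_mul, ← star_mulVec, trace_vecMulVec, dotProduct_comm,
    ofReal_sqNorm]

theorem star_dotProduct_mul_vecMulVec_mul_conjTranspose_mulVec (N : Matrix n n ℂ)
    (φ ψ : n → ℂ) :
    star ψ ⬝ᵥ ((N * vecMulVec φ (star φ) * Nᴴ) *ᵥ ψ) = Complex.normSq (star ψ ⬝ᵥ (N *ᵥ φ)) := by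
  rw [mul_vecMulVec, vecMulVec_mul, ← star_mulVec, vecMulVec_mulVec, op_smul_eq_smul,
    dotProduct_smul, smul_eq_mul, star_dotProduct (N *ᵥ φ)]
  exact Complex.normSq_eq_conj_mul_self.symm

variable [DecidableEq n]

theorem posSemidef_one_sub_sum_iff (N : κ → Matrix n n ℂ) :
    (1 - ∑ k, (N k)ᴴ * N k).PosSemidef ↔ ∀ x, ∑ k, sqNorm (N k *ᵥ x) ≤ sqNorm x := by
  have hform : ∀ x : n → ℂ, star x ⬝ᵥ ((1 - ∑ k, (N k)ᴴ * N k) *ᵥ x)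
      = ((sqNorm x - ∑ k, sqNorm (N k *ᵥ x) : ℝ) : ℂ) := by
    intro x
    simp only [sub_mulVec, one_mulVec, dotProduct_sub, Matrix.sum_mulVec, dotProduct_sum,
      ← mulVec_mulVec, dotProduct_conjTranspose_mulVec, Complex.ofReal_sub,
      Complex.ofReal_sum, ofReal_sqNorm]
  have hherm : (1 - ∑ k, (N k)ᴴ * N k).IsHermitian :=
    isHermitian_one.sub
      (isSelfAdjoint_sum _ fun k _ => isHermitian_conjTranspose_mul_self (N k))
  simp only [posSemidef_iff_dotProduct_mulVec, hherm, true_and, hform, Complex.zero_le_real,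
    sub_nonneg]

end KrausOperation

section WeightedCauchySchwarz

open Finset

variable {α : Type*} (s : Finset α) {q : α → ℝ} (D : α → ℂ)

/-- Weighted Lagrange identity: the defect in the weighted Cauchy–Schwarz inequality is a sum of
squares, which also yields its equality case. -/
theorem sum_normSq_sub_div (hq : ∀ i ∈ s, q i ≠ 0) :
    ∑ i ∈ s, Complex.normSq (D i - (∑ j ∈ s, D j) / (∑ j ∈ s, q j : ℝ) * q i) / q i
      = ∑ i ∈ s, Complex.normSq (D i) / q i
        - Complex.normSq (∑ i ∈ s, D i) / ∑ i ∈ s, q i := by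
  set S := ∑ i ∈ s, D i
  set F := ∑ i ∈ s, q i
  set z : ℂ := S / (F : ℂ)
  have hterm : ∀ i ∈ s, Complex.normSq (D i - z * q i) / q i
      = Complex.normSq (D i) / q i + Complex.normSq z * q i - 2 * (D i * star z).re := by
    intro i hi
    rw [Complex.normSq_sub, Complex.normSq_mul, Complex.normSq_ofReal, map_mul,
      Complex.conj_ofReal, ← mul_assoc (D i), Complex.re_mul_ofReal]
    field_simp [hq i hi]
    rfl
  rw [sum_congr rfl hterm, sum_sub_distrib, sum_add_distrib, ← mul_sum, ← mul_sum,
    ← Complex.re_sum, ← sum_mul]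
  have hz : Complex.normSq z = Complex.normSq S / F ^ 2 := by
    rw [Complex.normSq_div, Complex.normSq_ofReal, sq]
  have hSz : (S * star z).re = Complex.normSq S / F := by
    rw [star_div₀, Complex.star_def, Complex.conj_ofReal, mul_div_assoc', Complex.mul_conj,
      ← Complex.ofReal_div, Complex.ofReal_re]
  rw [hz, hSz]
  rcases eq_or_ne F 0 with hF | hF
  · simp [hF]
  · field_simp
    ring

theorem normSq_sum_div_le_sum_normSq_div (hq : ∀ i ∈ s, 0 < q i) :
    Complex.normSq (∑ i ∈ s, D i) / ∑ i ∈ s, q i ≤ ∑ i ∈ s, Complex.normSq (D i) / q i := by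
  have h := sum_normSq_sub_div s D fun i hi => (hq i hi).ne'
  have : 0 ≤ ∑ i ∈ s, Complex.normSq (D i - (∑ j ∈ s, D j) / (∑ j ∈ s, q j : ℝ) * q i) / q i :=
    sum_nonneg fun i hi => div_nonneg (Complex.normSq_nonneg _) (hq i hi).le
  linarith

theorem eq_div_mul_of_sum_normSq_div_le (hq : ∀ i ∈ s, 0 < q i)
    (h : ∑ i ∈ s, Complex.normSq (D i) / q i ≤ Complex.normSq (∑ i ∈ s, D i) / ∑ i ∈ s, q i) :
    ∀ i ∈ s, D i = (∑ j ∈ s, D j) / (∑ j ∈ s, q j : ℝ) * q i := by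
  have hnonneg : ∀ i ∈ s,
      0 ≤ Complex.normSq (D i - (∑ j ∈ s, D j) / (∑ j ∈ s, q j : ℝ) * q i) / q i :=
    fun i hi => div_nonneg (Complex.normSq_nonneg _) (hq i hi).le
  have hzero := (sum_eq_zero_iff_of_nonneg hnonneg).mp <| le_antisymm
    ((sum_normSq_sub_div s D fun i hi => (hq i hi).ne').trans_le (sub_nonpos.mpr h))
    (sum_nonneg hnonneg)
  intro i hi
  have hi0 := hzero i hi
  rwa [div_eq_zero_iff, or_iff_left (hq i hi).ne', Complex.normSq_eq_zero, sub_eq_zero] at hi0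

end WeightedCauchySchwarz

open Finset in
/-- The scalar core of the optimality bound, with `D k i = ⟨P_i ψ, N_k P_i φ⟩` and
`x k i = ‖N_k P_i φ‖²`: equality in the weighted Cauchy–Schwarz inequality forces
`D k i = λ_k q_i`, and the column bound at `j` then controls `∑_k |λ_k|²`. -/
theorem mul_le_mul_sum_of_sum_normSq_sum_eq {α κ : Type*} [Fintype κ] {T : Finset α}
    {p q : α → ℝ} (hq : ∀ i ∈ T, 0 < q i) (D : κ → α → ℂ) (x : κ → α → ℝ) {s : ℝ}
    (hD : ∀ k, ∀ i ∈ T, Complex.normSq (D k i) ≤ q i * x k i)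
    (hrow : ∑ k, ∑ i ∈ T, x k i ≤ s) (hcol : ∀ i ∈ T, ∑ k, x k i ≤ p i)
    (hfid : ∑ k, Complex.normSq (∑ i ∈ T, D k i) = (∑ i ∈ T, q i) * s)
    {j : α} (hj : j ∈ T) : q j * s ≤ p j * ∑ i ∈ T, q i := by
  set F := ∑ i ∈ T, q i
  have hF : 0 < F := sum_pos' (fun i hi => (hq i hi).le) ⟨j, hj, hq j hj⟩
  have hCS : ∀ k ∈ univ, Complex.normSq (∑ i ∈ T, D k i) / F
      ≤ ∑ i ∈ T, Complex.normSq (D k i) / q i :=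
    fun k _ => normSq_sum_div_le_sum_normSq_div T (D k) hq
  have hsum : ∑ k, ∑ i ∈ T, Complex.normSq (D k i) / q i
      ≤ ∑ k, Complex.normSq (∑ i ∈ T, D k i) / F := calc
    _ ≤ ∑ k, ∑ i ∈ T, x k i := sum_le_sum fun k _ => sum_le_sum fun i hi =>
          (div_le_iff₀' (hq i hi)).mpr (hD k i hi)
    _ ≤ s := hrow
    _ = ∑ k, Complex.normSq (∑ i ∈ T, D k i) / F := by
          rw [← sum_div, hfid, mul_div_cancel_left₀ _ hF.ne']
  have htight := (sum_eq_sum_iff_of_le hCS).mp (le_antisymm (sum_le_sum hCS) hsum)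
  have hDj : ∀ k, Complex.normSq (D k j) = Complex.normSq (∑ i ∈ T, D k i) / F ^ 2 * q j ^ 2 := by
    intro k
    rw [eq_div_mul_of_sum_normSq_div_le T (D k) hq (htight k (mem_univ k)).ge j hj,
      Complex.normSq_mul, Complex.normSq_div, Complex.normSq_ofReal, Complex.normSq_ofReal]
    ring
  have hxj : ∀ k ∈ univ, q j * (Complex.normSq (∑ i ∈ T, D k i) / F ^ 2) ≤ x k j := by
    intro k _
    have h := hD k j hj
    rw [hDj k] at h
    nlinarith [hq j hj]
  have hcolj := (sum_le_sum hxj).trans (hcol j hj)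
  have hFsq : F * s / F ^ 2 = s / F := by field_simp
  rwa [← mul_sum, ← sum_div, hfid, hFsq, mul_div_assoc', div_le_iff₀ hF] at hcolj

theorem commute_vecMulVec_of_mulVec_eq_smul {n : Type*} [Fintype n] {H : Matrix n n ℂ}
    (hH : H.IsHermitian) {u v : n → ℂ} {e : ℝ} (hu : H *ᵥ u = (e : ℂ) • u)
    (hv : H *ᵥ v = (e : ℂ) • v) : H * vecMulVec u (star v) = vecMulVec u (star v) * H := by
  rw [mul_vecMulVec, vecMulVec_mul, ← hH.eq, ← star_mulVec, hH.eq, hu, hv, star_smul,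
    Complex.star_def, Complex.conj_ofReal, smul_vecMulVec, vecMulVec_smul]

structure IsOrthogonalResolution {n ι : Type*} [Fintype n] [DecidableEq n] [Fintype ι]
    (P : ι → Matrix n n ℂ) : Prop where
  isHermitian : ∀ i, (P i).IsHermitian
  mul_self : ∀ i, P i * P i = P i
  mul_of_ne : ∀ i j, i ≠ j → P i * P j = 0
  sum_eq_one : ∑ i, P i = 1

/-- `Sp(φ) ∩ Sp(ψ)`. -/
noncomputable def jointSupport {n ι : Type*} [Fintype n] [Fintype ι] (P : ι → Matrix n n ℂ)
    (φ ψ : n → ℂ) : Finset ι :=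
  Finset.univ.filter fun i => sqNorm (P i *ᵥ φ) ≠ 0 ∧ sqNorm (P i *ᵥ ψ) ≠ 0

/-- The operator `M` of the statement: for unit `φ_E = P_E φ / √p_E` and `ψ_E = P_E ψ / √q_E`,
`√(c q_E / p_E) |ψ_E⟩⟨φ_E| = (√c / p_E) |P_E ψ⟩⟨P_E φ|`. -/
noncomputable def optimalKraus {n ι : Type*} [Fintype n] (P : ι → Matrix n n ℂ) (T : Finset ι)
    (c : ℝ) (φ ψ : n → ℂ) : Matrix n n ℂ :=
  ∑ i ∈ T, ((√c / sqNorm (P i *ᵥ φ) : ℝ) : ℂ) • vecMulVec (P i *ᵥ ψ) (star (P i *ᵥ φ))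

namespace IsOrthogonalResolution

variable {n ι : Type*} [Fintype n] [DecidableEq n] [Fintype ι] {P : ι → Matrix n n ℂ}
  (hP : IsOrthogonalResolution P)
include hP

theorem star_mulVec_dotProduct (i : ι) (x y : n → ℂ) :
    star (P i *ᵥ x) ⬝ᵥ y = star x ⬝ᵥ (P i *ᵥ y) := by
  rw [star_mulVec, ← dotProduct_mulVec, (hP.isHermitian i).eq]

theorem star_mulVec_dotProduct_mulVec (i : ι) (x y : n → ℂ) :
    star (P i *ᵥ x) ⬝ᵥ (P i *ᵥ y) = star x ⬝ᵥ (P i *ᵥ y) := by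
  rw [hP.star_mulVec_dotProduct, mulVec_mulVec, hP.mul_self]

theorem sum_mulVec (x : n → ℂ) : ∑ i, P i *ᵥ x = x := by
  rw [← Matrix.sum_mulVec, hP.sum_eq_one, one_mulVec]

theorem dotProduct_eq_sum (x y : n → ℂ) :
    star x ⬝ᵥ y = ∑ i, star (P i *ᵥ x) ⬝ᵥ (P i *ᵥ y) := by
  conv_lhs => rw [← hP.sum_mulVec y]
  simp only [dotProduct_sum, hP.star_mulVec_dotProduct_mulVec]

theorem sqNorm_eq_sum (x : n → ℂ) : sqNorm x = ∑ i, sqNorm (P i *ᵥ x) := by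
  simp only [sqNorm, hP.dotProduct_eq_sum x x, Complex.re_sum]

theorem sqNorm_mulVec_eq_sum {N : Matrix n n ℂ} (hN : ∀ i, N * P i = P i * N) (x : n → ℂ) :
    sqNorm (N *ᵥ x) = ∑ i, sqNorm (N *ᵥ (P i *ᵥ x)) := by
  simp only [hP.sqNorm_eq_sum (N *ᵥ x), mulVec_mulVec, hN]

theorem star_dotProduct_mulVec_eq_sum {N : Matrix n n ℂ} (hN : ∀ i, N * P i = P i * N)
    (x y : n → ℂ) :
    star y ⬝ᵥ (N *ᵥ x) = ∑ i ∈ jointSupport P x y, star (P i *ᵥ y) ⬝ᵥ (N *ᵥ (P i *ᵥ x)) := by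
  rw [hP.dotProduct_eq_sum, jointSupport, Finset.sum_filter_of_ne]
  · simp only [mulVec_mulVec, hN]
  intro i _ hi
  constructor <;> intro h0 <;> apply hi <;> rw [sqNorm_eq_zero.mp h0] <;> simp

theorem star_dotProduct_sum_mulVec (T : Finset ι) (y : n → ℂ) :
    star y ⬝ᵥ ∑ i ∈ T, P i *ᵥ y = ((∑ i ∈ T, sqNorm (P i *ᵥ y) : ℝ) : ℂ) := by
  simp only [dotProduct_sum, Complex.ofReal_sum, ofReal_sqNorm, hP.star_mulVec_dotProduct_mulVec]

theorem sqNorm_sum_mulVec (T : Finset ι) (y : n → ℂ) :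
    sqNorm (∑ i ∈ T, P i *ᵥ y) = ∑ i ∈ T, sqNorm (P i *ᵥ y) := by
  have hproj : ∀ j, P j *ᵥ ∑ i ∈ T, P i *ᵥ y = if j ∈ T then P j *ᵥ y else 0 := by
    intro j
    simp only [mulVec_sum, mulVec_mulVec]
    split_ifs with hj
    · rw [Finset.sum_eq_single_of_mem j hj fun i _ hij => by
        rw [hP.mul_of_ne j i hij.symm, zero_mulVec], hP.mul_self]
    · exact Finset.sum_eq_zero fun i hi => by
        rw [hP.mul_of_ne j i (ne_of_mem_of_not_mem hi hj).symm, zero_mulVec]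
  rw [hP.sqNorm_eq_sum]
  simp only [hproj, apply_ite sqNorm, sqNorm_eq_zero.mpr rfl, Finset.sum_ite_mem,
    Finset.univ_inter]

section OptimalKraus

variable {T : Finset ι} {c : ℝ} {φ ψ : n → ℂ}

theorem optimalKraus_mulVec_self (hT : ∀ i ∈ T, sqNorm (P i *ᵥ φ) ≠ 0) :
    optimalKraus P T c φ ψ *ᵥ φ = (√c : ℂ) • ∑ i ∈ T, P i *ᵥ ψ := by
  rw [optimalKraus, Matrix.sum_mulVec, Finset.smul_sum]
  refine Finset.sum_congr rfl fun i hi => ?_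
  rw [smul_mulVec, vecMulVec_mulVec, op_smul_eq_smul, hP.star_mulVec_dotProduct,
    ← hP.star_mulVec_dotProduct_mulVec, ← ofReal_sqNorm, smul_smul, ← Complex.ofReal_mul,
    div_mul_cancel₀ _ (hT i hi)]

theorem mulVec_optimalKraus_mulVec (x : n → ℂ) (j : ι) :
    P j *ᵥ (optimalKraus P T c φ ψ *ᵥ x) = if j ∈ T then
      (((√c / sqNorm (P j *ᵥ φ) : ℝ) : ℂ) * (star (P j *ᵥ φ) ⬝ᵥ x)) • (P j *ᵥ ψ) else 0 := by
  simp only [optimalKraus, Matrix.sum_mulVec, mulVec_sum, smul_mulVec, vecMulVec_mulVec,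
    op_smul_eq_smul, mulVec_smul, mulVec_mulVec, smul_smul]
  split_ifs with hj
  · rw [Finset.sum_eq_single j]
    · rw [hP.mul_self]
    · intro i _ hij
      rw [hP.mul_of_ne j i hij.symm, zero_mulVec, smul_zero]
    · exact fun h => (h hj).elim
  · refine Finset.sum_eq_zero fun i hi => ?_
    rw [hP.mul_of_ne j i (ne_of_mem_of_not_mem hi hj).symm, zero_mulVec, smul_zero]

theorem sqNorm_optimalKraus_mulVec_le (hc : 0 ≤ c)
    (hT : ∀ i ∈ T, 0 < sqNorm (P i *ᵥ φ) ∧ c * sqNorm (P i *ᵥ ψ) ≤ sqNorm (P i *ᵥ φ))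
    (x : n → ℂ) : sqNorm (optimalKraus P T c φ ψ *ᵥ x) ≤ sqNorm x := by
  rw [hP.sqNorm_eq_sum, hP.sqNorm_eq_sum x]
  refine Finset.sum_le_sum fun j _ => ?_
  rw [hP.mulVec_optimalKraus_mulVec]
  split_ifs with hj
  · obtain ⟨hp, hcq⟩ := hT j hj
    have hCS := normSq_dotProduct_le (P j *ᵥ φ) (P j *ᵥ x)
    rw [hP.star_mulVec_dotProduct_mulVec, ← hP.star_mulVec_dotProduct] at hCS
    rw [sqNorm_smul, Complex.normSq_mul, Complex.normSq_ofReal]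
    calc √c / sqNorm (P j *ᵥ φ) * (√c / sqNorm (P j *ᵥ φ))
          * Complex.normSq (star (P j *ᵥ φ) ⬝ᵥ x) * sqNorm (P j *ᵥ ψ)
        ≤ c / sqNorm (P j *ᵥ φ) ^ 2 * (sqNorm (P j *ᵥ φ) * sqNorm (P j *ᵥ x))
          * sqNorm (P j *ᵥ ψ) := by
          rw [div_mul_div_comm, Real.mul_self_sqrt hc, ← sq]
          gcongr
          exact sqNorm_nonneg _
      _ = c * sqNorm (P j *ᵥ ψ) / sqNorm (P j *ᵥ φ) * sqNorm (P j *ᵥ x) := by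
          field_simp
      _ ≤ sqNorm (P j *ᵥ x) := by
          rw [div_mul_eq_mul_div, div_le_iff₀ hp]
          exact mul_le_mul_of_nonneg_right hcq (sqNorm_nonneg _) |>.trans_eq (mul_comm _ _)
  · exact (sqNorm_eq_zero.mpr rfl).trans_le (sqNorm_nonneg _)

theorem posSemidef_one_sub_optimalKraus (hc : 0 ≤ c)
    (hT : ∀ i ∈ T, 0 < sqNorm (P i *ᵥ φ) ∧ c * sqNorm (P i *ᵥ ψ) ≤ sqNorm (P i *ᵥ φ)) :
    (1 - (optimalKraus P T c φ ψ)ᴴ * optimalKraus P T c φ ψ).PosSemidef := by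
  simpa using (posSemidef_one_sub_sum_iff fun _ : Unit => optimalKraus P T c φ ψ).mpr
    fun x => by simpa using hP.sqNorm_optimalKraus_mulVec_le hc hT x

theorem trace_optimalKraus (hc : 0 ≤ c) (hT : ∀ i ∈ T, sqNorm (P i *ᵥ φ) ≠ 0) :
    trace (optimalKraus P T c φ ψ * vecMulVec φ (star φ) * (optimalKraus P T c φ ψ)ᴴ)
      = ((c * ∑ i ∈ T, sqNorm (P i *ᵥ ψ) : ℝ) : ℂ) := by
  rw [trace_mul_vecMulVec_mul_conjTranspose, hP.optimalKraus_mulVec_self hT, sqNorm_smul,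
    hP.sqNorm_sum_mulVec, Complex.normSq_ofReal, Real.mul_self_sqrt hc]

theorem star_dotProduct_optimalKraus_mulVec (hc : 0 ≤ c)
    (hT : ∀ i ∈ T, sqNorm (P i *ᵥ φ) ≠ 0) :
    star ψ ⬝ᵥ ((optimalKraus P T c φ ψ * vecMulVec φ (star φ) * (optimalKraus P T c φ ψ)ᴴ) *ᵥ ψ)
      = ((c * (∑ i ∈ T, sqNorm (P i *ᵥ ψ)) ^ 2 : ℝ) : ℂ) := by
  rw [star_dotProduct_mul_vecMulVec_mul_conjTranspose_mulVec, hP.optimalKraus_mulVec_self hT,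
    dotProduct_smul, hP.star_dotProduct_sum_mulVec, smul_eq_mul, Complex.normSq_mul,
    Complex.normSq_ofReal, Complex.normSq_ofReal, Real.mul_self_sqrt hc, sq]

end OptimalKraus

section Spectral

variable {E : ι → ℝ} {H : Matrix n n ℂ} (hH : H = ∑ i, (E i : ℂ) • P i)
include hH

theorem mul_self_eq_smul (i : ι) : H * P i = (E i : ℂ) • P i := by
  rw [hH, Finset.sum_mul, Finset.sum_eq_single i]
  · rw [smul_mul, hP.mul_self]
  · intro j _ hji
    rw [smul_mul, hP.mul_of_ne j i hji, smul_zero]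
  · simp

theorem self_mul_eq_smul (i : ι) : P i * H = (E i : ℂ) • P i := by
  rw [hH, Finset.mul_sum, Finset.sum_eq_single i]
  · rw [Matrix.mul_smul, hP.mul_self]
  · intro j _ hji
    rw [Matrix.mul_smul, hP.mul_of_ne i j hji.symm, smul_zero]
  · simp

theorem mulVec_mulVec_eq_smul (i : ι) (x : n → ℂ) :
    H *ᵥ (P i *ᵥ x) = (E i : ℂ) • (P i *ᵥ x) := by
  rw [mulVec_mulVec, hP.mul_self_eq_smul hH, smul_mulVec]

theorem commute_of_commute (hE : Function.Injective E) {N : Matrix n n ℂ}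
    (hN : N * H = H * N) (i : ι) : N * P i = P i * N := by
  have hblock : ∀ a b, a ≠ b → P a * N * P b = 0 := by
    intro a b hab
    have h : ((E b : ℂ) - E a) • (P a * N * P b) = 0 := calc
      _ = P a * N * ((E b : ℂ) • P b) - ((E a : ℂ) • P a) * N * P b := by
        rw [sub_smul, Matrix.mul_smul, Matrix.smul_mul, Matrix.smul_mul]
      _ = P a * (N * H - H * N) * P b := by
        rw [← hP.mul_self_eq_smul hH, ← hP.self_mul_eq_smul hH]; noncomm_ring
      _ = 0 := by rw [hN, sub_self, mul_zero, zero_mul]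
    refine (smul_eq_zero.mp h).resolve_left ?_
    exact sub_ne_zero.mpr fun h => hab (hE (Complex.ofReal_injective h)).symm
  calc N * P i = ∑ a, P a * N * P i := by
        rw [← Finset.sum_mul, ← Finset.sum_mul, hP.sum_eq_one, one_mul]
    _ = P i * N * P i := Finset.sum_eq_single i (fun a _ h => hblock a i h) (by simp)
    _ = ∑ b, P i * N * P b := (Finset.sum_eq_single i (fun b _ h => hblock i b h.symm)
          (by simp)).symm
    _ = P i * N := by rw [← Finset.mul_sum, hP.sum_eq_one, mul_one]

theorem mul_le_of_fidelity_eq (hE : Function.Injective E) {κ : Type*} [Fintype κ]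
    (N : κ → Matrix n n ℂ) (hsub : (1 - ∑ k, (N k)ᴴ * N k).PosSemidef) (hNH : ∀ k, N k * H = H * N k) (φ ψ : n → ℂ)
    (hfid : ∑ k, Complex.normSq (star ψ ⬝ᵥ (N k *ᵥ φ))
      = (∑ i ∈ jointSupport P φ ψ, sqNorm (P i *ᵥ ψ)) * ∑ k, sqNorm (N k *ᵥ φ))
    {j : ι} (hj : j ∈ jointSupport P φ ψ) :
    sqNorm (P j *ᵥ ψ) * ∑ k, sqNorm (N k *ᵥ φ)
      ≤ sqNorm (P j *ᵥ φ) * ∑ i ∈ jointSupport P φ ψ, sqNorm (P i *ᵥ ψ) := by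
  have hNP : ∀ k i, N k * P i = P i * N k := fun k => hP.commute_of_commute hH hE (hNH k)
  have hq : ∀ i ∈ jointSupport P φ ψ, 0 < sqNorm (P i *ᵥ ψ) := fun i hi =>
    (sqNorm_nonneg _).lt_of_ne' (Finset.mem_filter.mp hi).2.2
  refine mul_le_mul_sum_of_sum_normSq_sum_eq hq
    (fun k i => star (P i *ᵥ ψ) ⬝ᵥ (N k *ᵥ (P i *ᵥ φ)))
    (fun k i => sqNorm (N k *ᵥ (P i *ᵥ φ)))
    (fun k i _ => normSq_dotProduct_le _ _) ?_
    (fun i _ => (posSemidef_one_sub_sum_iff N).mp hsub _) ?_ hj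
  · refine Finset.sum_le_sum fun k _ => ?_
    rw [hP.sqNorm_mulVec_eq_sum (hNP k)]
    exact Finset.sum_le_sum_of_subset_of_nonneg (Finset.subset_univ _)
      fun i _ _ => sqNorm_nonneg _
  · simpa only [← hP.star_dotProduct_mulVec_eq_sum (hNP _)] using hfid

theorem optimalKraus_commute (hHerm : H.IsHermitian) {T : Finset ι} {c : ℝ} {φ ψ : n → ℂ} :
    optimalKraus P T c φ ψ * H = H * optimalKraus P T c φ ψ := by
  simp only [optimalKraus, Finset.sum_mul, Finset.mul_sum, Matrix.smul_mul, Matrix.mul_smul,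
    commute_vecMulVec_of_mulVec_eq_smul hHerm (hP.mulVec_mulVec_eq_smul hH _ _)
      (hP.mulVec_mulVec_eq_smul hH _ _)]

end Spectral

end IsOrthogonalResolution

theorem sum_smul_vecMulVec_normalize_eq_optimalKraus {n ι : Type*} [Fintype n]
    (P : ι → Matrix n n ℂ) {T : Finset ι} {c : ℝ} (hc : 0 ≤ c) (φ ψ : n → ℂ)
    (hT : ∀ i ∈ T, 0 < sqNorm (P i *ᵥ φ) ∧ 0 < sqNorm (P i *ᵥ ψ)) :
    ∑ i ∈ T, ((√(c * sqNorm (P i *ᵥ ψ) / sqNorm (P i *ᵥ φ)) : ℝ) : ℂ) •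
        vecMulVec (((√(sqNorm (P i *ᵥ ψ)))⁻¹ : ℂ) • (P i *ᵥ ψ))
          (star (((√(sqNorm (P i *ᵥ φ)))⁻¹ : ℂ) • (P i *ᵥ φ)))
      = optimalKraus P T c φ ψ := by
  refine Finset.sum_congr rfl fun i hi => ?_
  obtain ⟨hp, hq⟩ := hT i hi
  rw [star_smul, smul_vecMulVec, vecMulVec_smul, smul_smul, smul_smul, Complex.star_def,
    map_inv₀, Complex.conj_ofReal, ← Complex.ofReal_inv, ← Complex.ofReal_inv,
    ← Complex.ofReal_mul, ← Complex.ofReal_mul]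
  congr 2
  rw [Real.sqrt_div' _ hp.le, Real.sqrt_mul hc]
  field_simp
  rw [Real.sq_sqrt hp.le]

theorem stmt_11_general {d : ℕ} {ι : Type} [Fintype ι]
    (H : Matrix (Fin d) (Fin d) ℂ) (hH : H.IsHermitian)
    (E : ι → ℝ) (hE : Function.Injective E)
    (P : ι → Matrix (Fin d) (Fin d) ℂ)
    (hHerm : ∀ i, (P i).IsHermitian)
    (hIdem : ∀ i, P i * P i = P i)
    (hOrth : ∀ i j, i ≠ j → P i * P j = 0)
    (hSum : ∑ i, P i = 1)
    (hSpec : H = ∑ i, (E i : ℂ) • P i)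
    (φ ψ : Fin d → ℂ)
    (hne : (Finset.univ.filter (fun i => wt (P i) φ ≠ 0 ∧ wt (P i) ψ ≠ 0)).Nonempty) :
    let T := Finset.univ.filter (fun i => wt (P i) φ ≠ 0 ∧ wt (P i) ψ ≠ 0)
    let Fmax : ℝ := ∑ i ∈ T, wt (P i) ψ
    let c : ℝ := T.inf' hne (fun i => wt (P i) φ / wt (P i) ψ)
    let φE : ι → (Fin d → ℂ) := fun i => ((Real.sqrt (wt (P i) φ))⁻¹ : ℂ) • (P i *ᵥ φ)
    let ψE : ι → (Fin d → ℂ) := fun i => ((Real.sqrt (wt (P i) ψ))⁻¹ : ℂ) • (P i *ᵥ ψ)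
    let M : Matrix (Fin d) (Fin d) ℂ :=
      ∑ i ∈ T, ((Real.sqrt (c * wt (P i) ψ / wt (P i) φ) : ℝ) : ℂ) •
        vecMulVec (ψE i) (star (φE i))
    (∀ (K : ℕ) (N : Fin K → Matrix (Fin d) (Fin d) ℂ),
      ((1 : Matrix (Fin d) (Fin d) ℂ) - ∑ k, (N k)ᴴ * N k).PosSemidef →
      (∀ k, N k * H = H * N k) →
      0 < Matrix.trace (∑ k, N k * vecMulVec φ (star φ) * (N k)ᴴ) →
      star ψ ⬝ᵥ ((∑ k, N k * vecMulVec φ (star φ) * (N k)ᴴ) *ᵥ ψ) /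
          Matrix.trace (∑ k, N k * vecMulVec φ (star φ) * (N k)ᴴ) = ((Fmax : ℝ) : ℂ) →
      Matrix.trace (∑ k, N k * vecMulVec φ (star φ) * (N k)ᴴ) ≤ ((c * Fmax : ℝ) : ℂ)) ∧
    ((1 : Matrix (Fin d) (Fin d) ℂ) - Mᴴ * M).PosSemidef ∧
    M * H = H * M ∧
    star ψ ⬝ᵥ ((M * vecMulVec φ (star φ) * Mᴴ) *ᵥ ψ) /
        Matrix.trace (M * vecMulVec φ (star φ) * Mᴴ) = ((Fmax : ℝ) : ℂ) ∧
    Matrix.trace (M * vecMulVec φ (star φ) * Mᴴ) = ((c * Fmax : ℝ) : ℂ) := by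
  intro T Fmax c φE ψE M
  have hP : IsOrthogonalResolution P := ⟨hHerm, hIdem, hOrth, hSum⟩
  have hpq : ∀ i ∈ T, 0 < wt (P i) φ ∧ 0 < wt (P i) ψ := fun i hi =>
    have h := (Finset.mem_filter.mp hi).2
    ⟨(sqNorm_nonneg _).lt_of_ne' h.1, (sqNorm_nonneg _).lt_of_ne' h.2⟩
  have hp : ∀ i ∈ T, sqNorm (P i *ᵥ φ) ≠ 0 := fun i hi => (hpq i hi).1.ne'
  obtain ⟨j, hj, hcj⟩ := Finset.exists_mem_eq_inf' hne fun i => wt (P i) φ / wt (P i) ψ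
  replace hcj : c = wt (P j) φ / wt (P j) ψ := hcj
  have hc : 0 < c := hcj ▸ div_pos (hpq j hj).1 (hpq j hj).2
  have hcT : ∀ i ∈ T, 0 < wt (P i) φ ∧ c * wt (P i) ψ ≤ wt (P i) φ := fun i hi =>
    ⟨(hpq i hi).1, (le_div_iff₀ (hpq i hi).2).mp (Finset.inf'_le _ hi)⟩
  have hF : 0 < Fmax := Finset.sum_pos (fun i hi => (hpq i hi).2) hne
  have hM : M = optimalKraus P T c φ ψ :=
    sum_smul_vecMulVec_normalize_eq_optimalKraus P hc.le φ ψ hpq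
  refine ⟨fun K N hsub hNH hpos hfid => ?_, hM ▸ hP.posSemidef_one_sub_optimalKraus hc.le hcT,
    hM ▸ hP.optimalKraus_commute hSpec hH, ?_, hM ▸ hP.trace_optimalKraus hc.le hp⟩
  · simp only [trace_sum, trace_mul_vecMulVec_mul_conjTranspose, Matrix.sum_mulVec,
      dotProduct_sum, star_dotProduct_mul_vecMulVec_mul_conjTranspose_mulVec,
      ← Complex.ofReal_sum] at hpos hfid ⊢
    have hs := Complex.zero_lt_real.mp hpos
    rw [← Complex.ofReal_div, Complex.ofReal_inj, div_eq_iff hs.ne'] at hfid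
    have hbound : wt (P j) ψ * ∑ k, sqNorm (N k *ᵥ φ) ≤ wt (P j) φ * Fmax :=
      hP.mul_le_of_fidelity_eq hSpec hE N hsub hNH φ ψ hfid hj
    rw [Complex.real_le_real, hcj, div_mul_eq_mul_div, le_div_iff₀ (hpq j hj).2]
    linarith
  · rw [hM, hP.trace_optimalKraus hc.le hp, hP.star_dotProduct_optimalKraus_mulVec hc.le hp,
      ← Complex.ofReal_div, Complex.ofReal_inj]
    field_simp
    rfl

/-- **Maximum-fidelity operations and their maximal success probability.** With `H` Hermitian
(spectral projections `P i`), unit vectors `φ, ψ`, `p_E = ‖P_E φ‖²`, `q_E = ‖P_E ψ‖²`,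
`F_max = ∑_{E ∈ Sp(φ)∩Sp(ψ)} q_E` and `c = min_{E ∈ Sp(φ)∩Sp(ψ)} p_E/q_E`: (i) every
energy-preserving quantum operation achieving normalized fidelity `F_max` has success
probability at most `c·F_max`; (ii) the single Kraus operator
`M = ∑_{E ∈ Sp(φ)∩Sp(ψ)} √(c q_E/p_E) |ψ_E⟩⟨φ_E|` is sub-normalized, commutes with `H`, and
achieves fidelity `F_max` with success probability exactly `c·F_max`. -/
theorem stmt_11 {d : ℕ} {ι : Type} [Fintype ι] [DecidableEq ι]
    (H : Matrix (Fin d) (Fin d) ℂ) (hH : H.IsHermitian)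
    (E : ι → ℝ) (hE : Function.Injective E)
    (P : ι → Matrix (Fin d) (Fin d) ℂ)
    (hHerm : ∀ i, (P i).IsHermitian)
    (hIdem : ∀ i, P i * P i = P i)
    (hOrth : ∀ i j, i ≠ j → P i * P j = 0)
    (hSum : ∑ i, P i = 1)
    (hSpec : H = ∑ i, (E i : ℂ) • P i)
    (φ ψ : Fin d → ℂ) (hφ : star φ ⬝ᵥ φ = 1) (hψ : star ψ ⬝ᵥ ψ = 1)
    (hne : (Finset.univ.filter (fun i => wt (P i) φ ≠ 0 ∧ wt (P i) ψ ≠ 0)).Nonempty) :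
    let T := Finset.univ.filter (fun i => wt (P i) φ ≠ 0 ∧ wt (P i) ψ ≠ 0)
    let Fmax : ℝ := ∑ i ∈ T, wt (P i) ψ
    let c : ℝ := T.inf' hne (fun i => wt (P i) φ / wt (P i) ψ)
    let φE : ι → (Fin d → ℂ) := fun i => ((Real.sqrt (wt (P i) φ))⁻¹ : ℂ) • (P i *ᵥ φ)
    let ψE : ι → (Fin d → ℂ) := fun i => ((Real.sqrt (wt (P i) ψ))⁻¹ : ℂ) • (P i *ᵥ ψ)
    let M : Matrix (Fin d) (Fin d) ℂ :=
      ∑ i ∈ T, ((Real.sqrt (c * wt (P i) ψ / wt (P i) φ) : ℝ) : ℂ) •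
        vecMulVec (ψE i) (star (φE i))
    (∀ (K : ℕ) (N : Fin K → Matrix (Fin d) (Fin d) ℂ),
      ((1 : Matrix (Fin d) (Fin d) ℂ) - ∑ k, (N k)ᴴ * N k).PosSemidef →
      (∀ k, N k * H = H * N k) →
      0 < Matrix.trace (∑ k, N k * vecMulVec φ (star φ) * (N k)ᴴ) →
      star ψ ⬝ᵥ ((∑ k, N k * vecMulVec φ (star φ) * (N k)ᴴ) *ᵥ ψ) /
          Matrix.trace (∑ k, N k * vecMulVec φ (star φ) * (N k)ᴴ) = ((Fmax : ℝ) : ℂ) →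
      Matrix.trace (∑ k, N k * vecMulVec φ (star φ) * (N k)ᴴ) ≤ ((c * Fmax : ℝ) : ℂ)) ∧
    ((1 : Matrix (Fin d) (Fin d) ℂ) - Mᴴ * M).PosSemidef ∧
    M * H = H * M ∧
    star ψ ⬝ᵥ ((M * vecMulVec φ (star φ) * Mᴴ) *ᵥ ψ) /
        Matrix.trace (M * vecMulVec φ (star φ) * Mᴴ) = ((Fmax : ℝ) : ℂ) ∧
    Matrix.trace (M * vecMulVec φ (star φ) * Mᴴ) = ((c * Fmax : ℝ) : ℂ) :=
  stmt_11_general H hH E hE P hHerm hIdem hOrth hSum hSpec φ ψ hne
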